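/- For a program P over 𝒰 and a query atom q ∈ 𝒰, q is bravely true for P if and only if the fresh atom q' is bravely true for the program tr(P) ∪ { q' ← q, not fail }, and q is cautiously true for P if and only if q' is cautiously true for tr(P) ∪ { q' ← q ; q' ← fail }. -/

import Mathlib

/-!
An answer set `M` of `P` corresponds to the answer set `M ∪ {α^T | α ∈ M} ∪ {α^F | α ∉ M}` of
`tr(P)`, and conversely every answer set of `tr(P)` without `fail` projects to an answer set of `P`;
the guessed atoms `α^F` play the role of the negative literals `not α` of the reduct. The query
rules only define the fresh atom `q'`, so an answer set of `tr(P)` extended by them is an answer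
set of `tr(P)`, plus `q'` exactly when one of the query rules fires. Under `q' ← q, not fail` this
happens in a fail-free answer set containing `q`; under `q' ← q` and `q' ← fail`, `q'` is missing
exactly from the fail-free answer sets that do not contain `q`.
-/

structure Rule (A : Type) where
  head : Set A
  pos : Set A
  neg : Set A

abbrev Program (A : Type) := Set (Rule A)

def satRule {A : Type} (I : Set A) (r : Rule A) : Prop :=
  r.pos ⊆ I → r.neg ∩ I = ∅ → (r.head ∩ I).Nonempty

def isModel {A : Type} (P : Program A) (I : Set A) : Prop := ∀ r ∈ P, satRule I r

def reduct {A : Type} (P : Program A) (K : Set A) : Program A :=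
  {r' | ∃ r ∈ P, r.neg ∩ K = ∅ ∧ r' = ⟨r.head, r.pos, ∅⟩}

def isAnswerSet {A : Type} (P : Program A) (M : Set A) : Prop :=
  isModel (reduct P M) M ∧ ∀ N ⊆ M, isModel (reduct P M) N → N = M

def factsOf {A : Type} (F : Set A) : Program A := {r | ∃ a ∈ F, r = ⟨{a}, ∅, ∅⟩}

def superCoherent {A : Type} (P : Program A) : Prop :=
  ∀ F : Set A, ∃ M, isAnswerSet (P ∪ factsOf F) M

def atomsOf {A : Type} (P : Program A) : Set A :=
  ⋃ r ∈ P, (r.head ∪ r.pos ∪ r.neg)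

/-- Atoms of the transformed program, extended by a fresh query atom q'. -/
inductive QAtom (A : Type) : Type
  | base : A → QAtom A
  | t : A → QAtom A
  | f : A → QAtom A
  | fail : QAtom A
  | qp : QAtom A

/-- The transformation tr(P) over the extended atom alphabet (q' unused in tr(P)). -/
def trProgQ {A : Type} (P : Program A) : Program (QAtom A) :=
  {r' | ∃ r ∈ P, r' = ⟨QAtom.base '' r.head, QAtom.base '' r.pos ∪ QAtom.f '' r.neg, ∅⟩} ∪
  {r' | ∃ a : A, r' = ⟨{QAtom.t a, QAtom.f a}, ∅, ∅⟩ ∨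
        r' = ⟨{QAtom.t a}, {QAtom.base a}, ∅⟩ ∨
        r' = ⟨{QAtom.fail}, {QAtom.t a}, {QAtom.base a}⟩}

def braveTrue {A : Type} (P : Program A) (q : A) : Prop :=
  ∃ M, isAnswerSet P M ∧ q ∈ M

def cautiouslyTrue {A : Type} (P : Program A) (q : A) : Prop :=
  ∀ M, isAnswerSet P M → q ∈ M

section AnswerSet

variable {α : Type}

lemma isModel_reduct_iff {P : Program α} {K I : Set α} :
    isModel (reduct P K) I ↔
      ∀ r ∈ P, r.neg ∩ K = ∅ → r.pos ⊆ I → (r.head ∩ I).Nonempty := by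
  constructor
  · intro h r hr hneg hpos
    exact h ⟨r.head, r.pos, ∅⟩ ⟨r, hr, hneg, rfl⟩ hpos (Set.empty_inter I)
  · rintro h r' ⟨r, hr, hneg, rfl⟩ hpos -
    exact h r hr hneg hpos

lemma reduct_union (P Q : Program α) (K : Set α) :
    reduct (P ∪ Q) K = reduct P K ∪ reduct Q K := by
  ext r
  simp only [reduct, Set.mem_union, Set.mem_ofPred_eq, or_and_right, exists_or]

lemma isModel_union {P Q : Program α} {I : Set α} :
    isModel (P ∪ Q) I ↔ isModel P I ∧ isModel Q I := by
  simp only [isModel, Set.mem_union, or_imp, forall_and]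

lemma isModel_reduct_iff_of_forall_head_eq {E : Program α} {x : α} (hE : ∀ e ∈ E, e.head = {x})
    {K I : Set α} :
    isModel (reduct E K) I ↔ ((∃ e ∈ E, e.neg ∩ K = ∅ ∧ e.pos ⊆ I) → x ∈ I) := by
  rw [isModel_reduct_iff]
  constructor
  · rintro h ⟨e, he, hneg, hpos⟩
    obtain ⟨y, hy, hyI⟩ := h e he hneg hpos
    rwa [hE e he, Set.mem_singleton_iff.1 hy] at *
  · intro h e he hneg hpos
    exact ⟨x, by rw [hE e he]; rfl, h ⟨e, he, hneg, hpos⟩⟩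

lemma reduct_anti (P : Program α) : Antitone (reduct P) := by
  rintro K K' hK _ ⟨r, hr, hneg, rfl⟩
  exact ⟨r, hr, Set.subset_eq_empty (Set.inter_subset_inter_right _ hK) hneg, rfl⟩

lemma isModel_anti {P P' : Program α} (hP : P ⊆ P') {I : Set α} (h : isModel P' I) :
    isModel P I :=
  fun r hr => h r (hP hr)

lemma inter_sdiff_singleton_of_notMem {s t : Set α} {x : α} (hx : x ∉ s) :
    s ∩ (t \ {x}) = s ∩ t := by
  rw [← Set.inter_sdiff_assoc, Set.sdiff_singleton_eq_self fun h => hx h.1]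

section Fresh

variable {Q : Program α} {x : α}

lemma reduct_sdiff_singleton_of_notMem_atomsOf (hQ : x ∉ atomsOf Q) (K : Set α) :
    reduct Q (K \ {x}) = reduct Q K := by
  ext r'
  simp only [reduct, atomsOf, Set.mem_iUnion, not_exists, Set.mem_union, not_or] at hQ ⊢
  constructor <;> rintro ⟨r, hr, hneg, rfl⟩ <;>
    exact ⟨r, hr, by simpa only [inter_sdiff_singleton_of_notMem (hQ r hr).2] using hneg, rfl⟩

lemma isModel_reduct_sdiff_singleton_iff (hQ : x ∉ atomsOf Q) (K I : Set α) :
    isModel (reduct Q K) (I \ {x}) ↔ isModel (reduct Q K) I := by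
  simp only [atomsOf, Set.mem_iUnion, not_exists, Set.mem_union, not_or] at hQ
  simp only [isModel_reduct_iff]
  refine forall₂_congr fun r hr => imp_congr_right fun _ => ?_
  rw [Set.subset_sdiff, Set.disjoint_singleton_right,
    inter_sdiff_singleton_of_notMem (hQ r hr).1.1]
  simp only [(hQ r hr).1.2, not_false_eq_true, and_true]

theorem isAnswerSet_union_iff_of_notMem_atomsOf (hQ : x ∉ atomsOf Q) {E : Program α}
    (hE : ∀ e ∈ E, e.head = {x} ∧ x ∉ e.pos) {M : Set α} :
    isAnswerSet (Q ∪ E) M ↔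
      isAnswerSet Q (M \ {x}) ∧ (x ∈ M ↔ ∃ e ∈ E, e.neg ∩ M = ∅ ∧ e.pos ⊆ M) := by
  have hQmod := isModel_reduct_sdiff_singleton_iff hQ
  simp only [isAnswerSet, reduct_union, isModel_union, reduct_sdiff_singleton_of_notMem_atomsOf hQ,
    hQmod, isModel_reduct_iff_of_forall_head_eq fun e he => (hE e he).1]
  constructor
  · rintro ⟨⟨hQM, hEM⟩, hmin⟩
    have hfires : x ∈ M ↔ ∃ e ∈ E, e.neg ∩ M = ∅ ∧ e.pos ⊆ M := by
      refine ⟨fun hx => ?_, hEM⟩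
      by_contra hnf
      have hMx := hmin (M \ {x}) Set.sdiff_subset ⟨(hQmod M M).2 hQM, fun ⟨e, he, hneg, hpos⟩ =>
        (hnf ⟨e, he, hneg, hpos.trans Set.sdiff_subset⟩).elim⟩
      exact (hMx.ge hx).2 rfl
    refine ⟨⟨hQM, fun N hNM hN => ?_⟩, hfires⟩
    have hxN : x ∉ N := fun hx => (hNM hx).2 rfl
    set N' := N ∪ M ∩ {x}
    have hN'x : N' \ {x} = N := by
      ext y; by_cases hy : y = x <;> simp [N', hy, hxN]
    have hN'M : N' ⊆ M := Set.union_subset (hNM.trans Set.sdiff_subset) Set.inter_subset_left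
    have hN' : N' = M := hmin N' hN'M ⟨(hQmod M N').1 (hN'x ▸ hN),
      fun ⟨e, he, hneg, hpos⟩ => Or.inr ⟨hEM ⟨e, he, hneg, hpos.trans hN'M⟩, rfl⟩⟩
    rw [← hN', hN'x]
  · rintro ⟨⟨hQM, hmin⟩, hfires⟩
    refine ⟨⟨hQM, hfires.2⟩, fun N hNM ⟨hQN, hEN⟩ => ?_⟩
    have hNx : N \ {x} = M \ {x} := hmin _ (Set.sdiff_subset_sdiff_left hNM) ((hQmod M N).2 hQN)
    refine hNM.antisymm fun y hy => ?_
    by_cases hyx : y = x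
    · subst hyx
      obtain ⟨e, he, hneg, hpos⟩ := hfires.1 hy
      refine hEN ⟨e, he, hneg, ?_⟩
      calc e.pos ⊆ M \ {y} := Set.subset_sdiff_singleton hpos (hE e he).2
        _ = N \ {y} := hNx.symm
        _ ⊆ N := Set.sdiff_subset
    · exact (hNx.ge ⟨hy, hyx⟩).1

end Fresh
end AnswerSet

section Translation

variable {α : Type} {P : Program α}

open QAtom

lemma isModel_reduct_trProgQ_iff {K I : Set (QAtom α)} :
    isModel (reduct (trProgQ P) K) I ↔
      isModel (reduct P (f ⁻¹' I)ᶜ) (base ⁻¹' I) ∧ (∀ a, t a ∈ I ∨ f a ∈ I) ∧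
        (∀ a, base a ∈ I → t a ∈ I) ∧ (∀ a, base a ∉ K → t a ∈ I → fail ∈ I) := by
  rw [trProgQ, reduct_union, isModel_union, isModel_reduct_iff, isModel_reduct_iff,
    isModel_reduct_iff]
  congr! 1
  · simp only [Set.mem_ofPred_eq, forall_exists_index, and_imp]
    rw [forall_comm]
    simp only [forall_eq_apply_imp_iff, Set.empty_inter, Set.union_subset_iff, Set.image_subset_iff,
      Set.image_inter_nonempty_iff, and_imp, forall_const, ← Set.sdiff_eq, Set.sdiff_eq_empty]
    exact forall₂_congr fun _ _ => imp.swap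
  · simp only [Set.mem_ofPred_eq, forall_exists_index, or_imp, forall_and]
    rw [forall_comm]
    simp [Set.Nonempty]

lemma qp_notMem_atomsOf_trProgQ : qp ∉ atomsOf (trProgQ P) := by
  simp only [atomsOf, Set.mem_iUnion, not_exists]
  rintro _ (⟨r, -, rfl⟩ | ⟨a, rfl | rfl | rfl⟩) <;> simp

/-- `trInterp M M` encodes `M`; with `N ⊆ M`, `trInterp N M` is the competing model in
minimality arguments. -/
def trInterp (N M : Set α) : Set (QAtom α) := base '' N ∪ t '' M ∪ f '' Mᶜ

variable {N M : Set α}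

@[simp] lemma base_mem_trInterp {a : α} : base a ∈ trInterp N M ↔ a ∈ N := by simp [trInterp]

@[simp] lemma t_mem_trInterp {a : α} : t a ∈ trInterp N M ↔ a ∈ M := by simp [trInterp]

@[simp] lemma f_mem_trInterp {a : α} : f a ∈ trInterp N M ↔ a ∉ M := by simp [trInterp]

@[simp] lemma fail_notMem_trInterp : fail ∉ trInterp N M := by simp [trInterp]

@[simp] lemma qp_notMem_trInterp : qp ∉ trInterp N M := by simp [trInterp]

@[simp] lemma preimage_base_trInterp : base ⁻¹' trInterp N M = N := by ext; simp

@[simp] lemma preimage_f_trInterp : f ⁻¹' trInterp N M = Mᶜ := by ext; simp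

theorem isAnswerSet_trProgQ_trInterp (hM : isAnswerSet P M) :
    isAnswerSet (trProgQ P) (trInterp M M) := by
  refine ⟨isModel_reduct_trProgQ_iff.2 ⟨by simpa using hM.1, by simp [em], by simp, by simp⟩,
    fun N' hN'M hN' => ?_⟩
  obtain ⟨hP, htf, hbt, -⟩ := isModel_reduct_trProgQ_iff.1 hN'
  have hf : f ⁻¹' N' = Mᶜ := by
    refine Set.Subset.antisymm (fun a ha => by simpa using hN'M ha) fun a ha => ?_
    exact (htf a).resolve_left fun hta => ha (by simpa using hN'M hta)
  rw [hf, compl_compl] at hP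
  have hN : base ⁻¹' N' = M := hM.2 _ (fun a ha => by simpa using hN'M ha) hP
  refine hN'M.antisymm ?_
  rintro _ ((⟨a, ha, rfl⟩ | ⟨a, ha, rfl⟩) | ⟨a, ha, rfl⟩)
  exacts [hN.ge ha, hbt a (hN.ge ha), hf.ge ha]

theorem isAnswerSet_preimage_base_of_fail_notMem {M : Set (QAtom α)}
    (hM : isAnswerSet (trProgQ P) M) (hfail : fail ∉ M) : isAnswerSet P (base ⁻¹' M) := by
  obtain ⟨hmod, hmin⟩ := hM
  obtain ⟨hP, htf, hbt, htfail⟩ := isModel_reduct_trProgQ_iff.1 hmod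
  have ht : t ⁻¹' M ⊆ base ⁻¹' M := fun a hta => by_contra fun hb => hfail (htfail a hb hta)
  have hf : (base ⁻¹' M)ᶜ ⊆ f ⁻¹' M := fun a ha => (htf a).resolve_left fun hta => ha (ht hta)
  refine ⟨isModel_anti (reduct_anti P (Set.compl_subset_comm.1 hf)) hP, fun N hNM hN => ?_⟩
  have hsub : trInterp N (base ⁻¹' M) ⊆ M := by
    rintro _ ((⟨a, ha, rfl⟩ | ⟨a, ha, rfl⟩) | ⟨a, ha, rfl⟩)
    exacts [hNM ha, hbt a ha, hf ha]
  have hN' := hmin _ hsub <| isModel_reduct_trProgQ_iff.2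
    ⟨by simpa using hN, by simp [em], fun a => by simpa using @hNM a, by simp⟩
  rw [← preimage_base_trInterp (N := N) (M := base ⁻¹' M), hN']

end Translation

section QuerySimulation

variable {α : Type} (P : Program α) (q : α)

open QAtom

theorem braveTrue_iff_braveTrue_trProgQ :
    braveTrue P q ↔ braveTrue (trProgQ P ∪ {⟨{qp}, {base q}, {fail}⟩}) qp := by
  simp only [braveTrue, isAnswerSet_union_iff_of_notMem_atomsOf qp_notMem_atomsOf_trProgQ
    (E := {⟨{qp}, {base q}, {fail}⟩}) (by simp)]
  simp only [Set.mem_singleton_iff, exists_eq_left, Set.singleton_inter_eq_empty,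
    Set.singleton_subset_iff]
  constructor
  · rintro ⟨M, hM, hq⟩
    refine ⟨insert qp (trInterp M M), ⟨?_, by simpa using hq⟩, Set.mem_insert _ _⟩
    rw [Set.insert_sdiff_self_of_notMem qp_notMem_trInterp]
    exact isAnswerSet_trProgQ_trInterp hM
  · rintro ⟨M, ⟨hM, hfires⟩, hqp⟩
    obtain ⟨hfail, hq⟩ := hfires.1 hqp
    exact ⟨_, isAnswerSet_preimage_base_of_fail_notMem hM fun h => hfail h.1, hq, by simp⟩

theorem cautiouslyTrue_iff_cautiouslyTrue_trProgQ :
    cautiouslyTrue P q ↔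
      cautiouslyTrue (trProgQ P ∪ {⟨{qp}, {base q}, ∅⟩, ⟨{qp}, {fail}, ∅⟩}) qp := by
  simp only [cautiouslyTrue, isAnswerSet_union_iff_of_notMem_atomsOf qp_notMem_atomsOf_trProgQ
    (E := {⟨{qp}, {base q}, ∅⟩, ⟨{qp}, {fail}, ∅⟩}) (by simp)]
  simp only [Set.mem_insert_iff, Set.mem_singleton_iff, exists_eq_or_imp, exists_eq_left,
    Set.empty_inter, Set.singleton_subset_iff, true_and]
  constructor
  · rintro hcaut M ⟨hM, hfires⟩
    by_cases hfail : fail ∈ M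
    · exact hfires.2 (Or.inr hfail)
    · have hq := hcaut _ (isAnswerSet_preimage_base_of_fail_notMem hM fun h => hfail h.1)
      exact hfires.2 (Or.inl hq.1)
  · intro hcaut M hM
    by_contra hq
    simpa using hcaut (trInterp M M) ⟨by simpa using isAnswerSet_trProgQ_trInterp hM, by simpa using hq⟩

end QuerySimulation

theorem query_simulation_general {A : Type} (P : Program A) (q : A) :
    (braveTrue P q ↔
      braveTrue (trProgQ P ∪ {⟨{QAtom.qp}, {QAtom.base q}, {QAtom.fail}⟩}) QAtom.qp) ∧
    (cautiouslyTrue P q ↔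
      cautiouslyTrue
        (trProgQ P ∪ {⟨{QAtom.qp}, {QAtom.base q}, ∅⟩, ⟨{QAtom.qp}, {QAtom.fail}, ∅⟩})
        QAtom.qp) :=
  ⟨braveTrue_iff_braveTrue_trProgQ P q, cautiouslyTrue_iff_cautiouslyTrue_trProgQ P q⟩

/-- q is bravely true for P iff q' is bravely true for tr(P) ∪ { q' ← q, not fail },
and q is cautiously true for P iff q' is cautiously true for
tr(P) ∪ { q' ← q ; q' ← fail }. -/
theorem query_simulation {A : Type} (P : Program A)
    (hnc : ∀ r ∈ P, r.head.Nonempty) (q : A) :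
    (braveTrue P q ↔
      braveTrue (trProgQ P ∪ {⟨{QAtom.qp}, {QAtom.base q}, {QAtom.fail}⟩}) QAtom.qp) ∧
    (cautiouslyTrue P q ↔
      cautiouslyTrue
        (trProgQ P ∪ {⟨{QAtom.qp}, {QAtom.base q}, ∅⟩, ⟨{QAtom.qp}, {QAtom.fail}, ∅⟩})
        QAtom.qp) :=
  query_simulation_general P q
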